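/- arXiv:0704.3962 — 4 statements merged into one kernel-verified Lean document; each statement's English description precedes it below -/
import Mathlib

section
/- For a prime p, a fixed level m ∈ ℕ, and integers 0 ≤ k ≤ l, write q_k for the quotient of the Euclidean division of k by p^m. Then the number ⟨l choose k⟩ := (l choose k) · (q_k! · q_{l-k}! / q_l!) is a p-adic integer, i.e. its p-adic valuation is nonnegative (equivalently it lies in ℤ_(p)). -/
open Finset

private lemma key_sum_split (p : ℕ) (hp : p.Prime) (m B : ℕ) (n : ℕ)
    (hn : n < B) (hmB : m + 1 ≤ B) :
    (∑ j ∈ Ico 1 B, n / p ^ j) =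
      (∑ j ∈ Ico 1 (m + 1), n / p ^ j) + ∑ i ∈ Ico 1 B, n / p ^ (m + i) := by
  have hzero : ∀ j ∈ Ico B (m + B), n / p ^ j = 0 := by
    intro j hj
    rw [mem_Ico] at hj
    apply Nat.div_eq_of_lt
    calc n < B := hn
      _ ≤ j := hj.1
      _ < 2 ^ j := Nat.lt_two_pow_self (n := j)
      _ ≤ p ^ j := Nat.pow_le_pow_left hp.two_le j
  have h1 : (∑ i ∈ Ico 1 B, n / p ^ (m + i)) = ∑ j ∈ Ico (m + 1) (m + B), n / p ^ j := by
    rw [show m + 1 = 1 + m by omega, show m + B = B + m by omega,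
      ← Finset.sum_Ico_add (fun j => n / p ^ j) 1 B m]
  have h2 : (∑ j ∈ Ico (m + 1) (m + B), n / p ^ j) = ∑ j ∈ Ico (m + 1) B, n / p ^ j := by
    rw [← Finset.sum_Ico_consecutive (fun j => n / p ^ j) hmB (by omega : B ≤ m + B)]
    rw [Finset.sum_eq_zero hzero, add_zero]
  rw [h1, h2, Finset.sum_Ico_consecutive (fun j => n / p ^ j) (by omega : 1 ≤ m + 1) hmB]

/- STATEMENT 0: For a prime `p`, a level `m : ℕ`, and `k ≤ l`, writing `q n = n / p ^ m`
(Euclidean quotient), the rational number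
`⟨l choose k⟩ = (l.choose k) * (q k)! * (q (l-k))! / (q l)!` has nonnegative `p`-adic
valuation, i.e. it lies in `ℤ_(p)`. -/
theorem binom_level_m_padic_integral (p : ℕ) (hp : p.Prime) (m : ℕ) (k l : ℕ) (hkl : k ≤ l) :
    0 ≤ padicValRat p ((l.choose k : ℚ) *
      ((Nat.factorial (k / p ^ m) : ℚ) * (Nat.factorial ((l - k) / p ^ m) : ℚ) /
        (Nat.factorial (l / p ^ m) : ℚ))) := by
  haveI : Fact p.Prime := ⟨hp⟩
  set B := m + l + 1 with hB
  have hmB : m + 1 ≤ B := by omega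
  -- Legendre valuations
  have hfac : ∀ n : ℕ, n ≤ l →
      padicValNat p (Nat.factorial n) = ∑ j ∈ Ico 1 B, n / p ^ j := by
    intro n hn
    exact padicValNat_factorial (lt_of_le_of_lt (Nat.log_le_self p n) (by omega))
  have hqfac : ∀ n : ℕ, n ≤ l →
      padicValNat p (Nat.factorial (n / p ^ m)) = ∑ i ∈ Ico 1 B, n / p ^ (m + i) := by
    intro n hn
    rw [padicValNat_factorial (p := p) (n := n / p ^ m) (b := B)
      (lt_of_le_of_lt (le_trans (Nat.log_le_self _ _) (Nat.div_le_self _ _)) (by omega))]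
    apply Finset.sum_congr rfl
    intro i _
    rw [Nat.div_div_eq_div_mul, ← pow_add]
  -- key splitting
  have hsplit : ∀ n : ℕ, n ≤ l →
      (∑ j ∈ Ico 1 B, n / p ^ j) =
        (∑ j ∈ Ico 1 (m + 1), n / p ^ j) + ∑ i ∈ Ico 1 B, n / p ^ (m + i) :=
    fun n hn => key_sum_split p hp m B n (by omega) hmB
  -- T inequality
  have hT : (∑ j ∈ Ico 1 (m + 1), k / p ^ j) + (∑ j ∈ Ico 1 (m + 1), (l - k) / p ^ j)
      ≤ ∑ j ∈ Ico 1 (m + 1), l / p ^ j := by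
    rw [← Finset.sum_add_distrib]
    apply Finset.sum_le_sum
    intro j _
    calc k / p ^ j + (l - k) / p ^ j ≤ (k + (l - k)) / p ^ j := Nat.add_div_le_add_div _ _ _
      _ = l / p ^ j := by rw [Nat.add_sub_cancel' hkl]
  -- main nat inequality on valuations
  have hchoose : padicValNat p (l.choose k) + padicValNat p (Nat.factorial k)
      + padicValNat p (Nat.factorial (l - k)) = padicValNat p (Nat.factorial l) := by
    rw [← padicValNat.mul (Nat.choose_pos hkl).ne' (Nat.factorial_ne_zero k),
      ← padicValNat.mul (mul_ne_zero (Nat.choose_pos hkl).ne' (Nat.factorial_ne_zero k))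
        (Nat.factorial_ne_zero (l - k)),
      Nat.choose_mul_factorial_mul_factorial hkl]
  have hmain : padicValNat p (Nat.factorial (l / p ^ m)) ≤
      padicValNat p (l.choose k) + padicValNat p (Nat.factorial (k / p ^ m))
      + padicValNat p (Nat.factorial ((l - k) / p ^ m)) := by
    have h1 := hfac k hkl
    have h2 := hfac (l - k) (Nat.sub_le l k)
    have h3 := hfac l le_rfl
    have h4 := hqfac k hkl
    have h5 := hqfac (l - k) (Nat.sub_le l k)
    have h6 := hqfac l le_rfl
    have s1 := hsplit k hkl
    have s2 := hsplit (l - k) (Nat.sub_le l k)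
    have s3 := hsplit l le_rfl
    -- from hchoose: v(choose) + S k + S (l-k) = S l
    rw [h1, h2, h3] at hchoose
    rw [h4, h5, h6]
    omega
  -- assemble the rational statement
  have hc0 : (Nat.factorial (l / p ^ m) : ℚ) ≠ 0 := by
    exact_mod_cast Nat.factorial_ne_zero _
  have hA0 : ((l.choose k * Nat.factorial (k / p ^ m) * Nat.factorial ((l - k) / p ^ m) : ℕ) : ℚ)
      ≠ 0 := by
    have := Nat.choose_pos hkl
    have := Nat.factorial_pos (k / p ^ m)
    have := Nat.factorial_pos ((l - k) / p ^ m)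
    positivity
  have hrw : (l.choose k : ℚ) *
      ((Nat.factorial (k / p ^ m) : ℚ) * (Nat.factorial ((l - k) / p ^ m) : ℚ) /
        (Nat.factorial (l / p ^ m) : ℚ)) =
      ((l.choose k * Nat.factorial (k / p ^ m) * Nat.factorial ((l - k) / p ^ m) : ℕ) : ℚ) /
        ((Nat.factorial (l / p ^ m) : ℕ) : ℚ) := by
    push_cast
    ring
  rw [hrw, padicValRat.div hA0 hc0, padicValRat.of_nat, padicValRat.of_nat, sub_nonneg]
  have : padicValNat p (l.choose k * Nat.factorial (k / p ^ m) *
      Nat.factorial ((l - k) / p ^ m)) = padicValNat p (l.choose k)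
      + padicValNat p (Nat.factorial (k / p ^ m))
      + padicValNat p (Nat.factorial ((l - k) / p ^ m)) := by
    rw [padicValNat.mul (mul_ne_zero (Nat.choose_pos hkl).ne' (Nat.factorial_ne_zero _))
        (Nat.factorial_ne_zero _),
      padicValNat.mul (Nat.choose_pos hkl).ne' (Nat.factorial_ne_zero _)]
  rw [this]
  exact_mod_cast hmain
end

section
/- For a prime p, level m, and k, l ∈ ℕ, one has q_k! · q_l! divides q_{k+l}! · (k+l choose k) in the sense that the rational number (k+l choose k) · q_{k+l}! / (q_k! · q_l!) has nonnegative p-adic valuation, where q_n denotes the quotient of n by p^m. -/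
/- STATEMENT 1: For a prime `p`, level `m`, and `k, l : ℕ`, with `q n = n / p ^ m`,
`q k ! * q l !` divides `q (k+l) ! * ((k+l).choose k)` in the sense that the rational
number `((k+l).choose k) * q (k+l)! / (q k ! * q l !)` has nonnegative `p`-adic
valuation. -/
theorem divided_power_structure_constant_padic_integral (p : ℕ) (hp : p.Prime) (m : ℕ)
    (k l : ℕ) :
    0 ≤ padicValRat p (((k + l).choose k : ℚ) *
      (Nat.factorial ((k + l) / p ^ m) : ℚ) /
      ((Nat.factorial (k / p ^ m) : ℚ) * (Nat.factorial (l / p ^ m) : ℚ))) := by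
  have hpm : 0 < p ^ m := pow_pos hp.pos m
  have hle : k / p ^ m + l / p ^ m ≤ (k + l) / p ^ m := by
    rw [Nat.le_div_iff_mul_le hpm, add_mul]
    exact Nat.add_le_add (Nat.div_mul_le_self k _) (Nat.div_mul_le_self l _)
  have hdvd : Nat.factorial (k / p ^ m) * Nat.factorial (l / p ^ m) ∣
      Nat.factorial ((k + l) / p ^ m) :=
    (Nat.factorial_mul_factorial_dvd_factorial_add _ _).trans
      (Nat.factorial_dvd_factorial hle)
  obtain ⟨c, hc⟩ := hdvd
  have hD : ((Nat.factorial (k / p ^ m) : ℚ) * (Nat.factorial (l / p ^ m) : ℚ)) ≠ 0 := by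
    positivity
  have hc' : (Nat.factorial ((k + l) / p ^ m) : ℚ) =
      ((Nat.factorial (k / p ^ m) : ℚ) * (Nat.factorial (l / p ^ m) : ℚ)) * (c : ℚ) := by
    exact_mod_cast congrArg (Nat.cast : ℕ → ℚ) hc
  have heq : (((k + l).choose k : ℚ) * (Nat.factorial ((k + l) / p ^ m) : ℚ) /
      ((Nat.factorial (k / p ^ m) : ℚ) * (Nat.factorial (l / p ^ m) : ℚ)))
      = (((k + l).choose k * c : ℕ) : ℚ) := by
    rw [hc']
    push_cast
    field_simp
  rw [heq]
  have hn : ((k + l).choose k * c) ≠ 0 := by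
    have hc0 : c ≠ 0 := by
      intro h
      rw [h, mul_zero] at hc
      exact (Nat.factorial_ne_zero _) hc
    exact Nat.mul_ne_zero (Nat.choose_pos (Nat.le_add_right k l)).ne' hc0
  rw [padicValRat.of_nat]
  exact Int.ofNat_nonneg _
end

section
/- Let A be a (possibly noncommutative) ring, D a sheaf of rings on a topological space X with Γ(X, D) = A. Suppose the functor Γ(X, −) is exact on coherent left D-modules, the natural map A^n → Γ(X, D^n) is an isomorphism, and every coherent left D-module M admits a presentation D^b → D^a → M → 0. Then for every left A-module M of finite presentation, the unit map M → Γ(X, D ⊗_A M) is an isomorphism, and for every coherent left D-module N the counit D ⊗_A Γ(X, N) → N is an isomorphism; hence Γ(X, −) and D ⊗_A − are quasi-inverse equivalences between finitely presented left A-modules and coherent left D-modules. -/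
open CategoryTheory Limits

universe u v w

/-- Auxiliary lemma: if `u : N' ⟶ N` is compatible with cokernel presentations of `N'` and
`N` whose corresponding "generators/relations" objects are isomorphic compatibly, then `u`
is an isomorphism. -/
lemma aux_cokernel_comparison_isIso {E : Type*} [Category E] [HasZeroMorphisms E]
    {Xb Xa Xb' Xa' N N' : E}
    {f : Xb ⟶ Xa} {g : Xa ⟶ N} {w : f ≫ g = 0}
    {f' : Xb' ⟶ Xa'} {g' : Xa' ⟶ N'} {w' : f' ≫ g' = 0}
    (hc : IsColimit (CokernelCofork.ofπ g w))
    (hc' : IsColimit (CokernelCofork.ofπ g' w'))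
    (eb : Xb' ≅ Xb) (ea : Xa' ≅ Xa)
    (hsq : f' ≫ ea.hom = eb.hom ≫ f)
    (u : N' ⟶ N) (hu : g' ≫ u = ea.hom ≫ g) : IsIso u := by
  have hsq' : f ≫ ea.inv = eb.inv ≫ f' := by
    rw [Iso.eq_inv_comp, ← Category.assoc, ← hsq, Category.assoc, Iso.hom_inv_id,
      Category.comp_id]
  have hfw : f ≫ ea.inv ≫ g' = 0 := by
    rw [← Category.assoc, hsq', Category.assoc, w', comp_zero]
  let v : N ⟶ N' := Cofork.IsColimit.desc hc (ea.inv ≫ g') (by simpa using hfw)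
  have hv : g ≫ v = ea.inv ≫ g' :=
    Cofork.IsColimit.π_desc' hc (ea.inv ≫ g') (by simpa using hfw)
  refine ⟨v, ?_, ?_⟩
  · apply Cofork.IsColimit.hom_ext hc'
    show g' ≫ u ≫ v = g' ≫ 𝟙 N'
    rw [Category.comp_id, ← Category.assoc, hu, Category.assoc, hv,
      ← Category.assoc, Iso.hom_inv_id, Category.id_comp]
  · apply Cofork.IsColimit.hom_ext hc
    show g ≫ v ≫ u = g ≫ 𝟙 N
    rw [Category.comp_id, ← Category.assoc, hv, Category.assoc, hu,
      ← Category.assoc, Iso.inv_hom_id, Category.id_comp]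

/- STATEMENT 7: Let `A` be a (possibly noncommutative) ring and `D` a sheaf of rings on
a space `X` with `Γ(X, D) = A`.  We work with the abelian category `C` of coherent left
`D`-modules, the global sections functor `G = Γ(X, −) : C ⥤ ModuleCat A` and its left
adjoint `T = D ⊗_A − : ModuleCat A ⥤ C` (so `D = T A` and `D^n = T A^n`).  Hypotheses:
`Γ` is exact on coherent `D`-modules, the natural maps `A^n → Γ(X, D^n)` (the unit at
the free modules `A^n`) are isomorphisms, and every coherent `D`-module admits a
presentation `D^b → D^a → M → 0`.  Conclusion: the unit `M → Γ(X, D ⊗_A M)` is an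
isomorphism for every finitely presented `A`-module `M`, and the counit
`D ⊗_A Γ(X, N) → N` is an isomorphism for every coherent `D`-module `N`; hence
`Γ(X, −)` and `D ⊗_A −` are quasi-inverse equivalences. -/
theorem beilinson_bernstein_equivalence_criterion
    (A : Type u) [Ring A]
    (C : Type v) [Category.{w} C] [Abelian C]
    (T : ModuleCat.{u} A ⥤ C) (G : C ⥤ ModuleCat.{u} A)
    (adj : T ⊣ G)
    [PreservesFiniteLimits G] [PreservesFiniteColimits G]
    (hfree : ∀ n : ℕ, IsIso (adj.unit.app (ModuleCat.of A (Fin n → A))))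
    (hpres : ∀ N : C, ∃ (a b : ℕ)
      (f : T.obj (ModuleCat.of A (Fin b → A)) ⟶ T.obj (ModuleCat.of A (Fin a → A)))
      (g : T.obj (ModuleCat.of A (Fin a → A)) ⟶ N) (wfg : f ≫ g = 0),
      Epi g ∧ (ShortComplex.mk f g wfg).Exact) :
    (∀ M : ModuleCat.{u} A, Module.FinitePresentation A M → IsIso (adj.unit.app M)) ∧
      (∀ N : C, IsIso (adj.counit.app N)) := by
  haveI : T.IsLeftAdjoint := ⟨G, ⟨adj⟩⟩
  haveI : G.IsRightAdjoint := ⟨T, ⟨adj⟩⟩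
  haveI : PreservesColimits T := adj.leftAdjoint_preservesColimits
  -- counit is an isomorphism on objects `T.obj X` with unit iso at `X`
  have hcounit_free : ∀ n : ℕ, IsIso (adj.counit.app (T.obj (ModuleCat.of A (Fin n → A)))) := by
    intro n
    haveI := hfree n
    haveI : IsIso (T.map (adj.unit.app (ModuleCat.of A (Fin n → A)))) := inferInstance
    haveI : IsIso (T.map (adj.unit.app (ModuleCat.of A (Fin n → A))) ≫
        adj.counit.app (T.obj (ModuleCat.of A (Fin n → A)))) := by
      erw [adj.left_triangle_components]; exact IsIso.id _
    exact IsIso.of_isIso_comp_left (T.map (adj.unit.app (ModuleCat.of A (Fin n → A)))) _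
  constructor
  · -- the unit at finitely presented modules
    intro M hM
    haveI : Module.FinitePresentation A M := hM
    obtain ⟨a, l, hl⟩ := Module.Finite.exists_fin' A M
    have hker : (LinearMap.ker l).FG := Module.FinitePresentation.fg_ker l hl
    haveI : Module.Finite A (LinearMap.ker l) := Module.Finite.iff_fg.mpr hker
    obtain ⟨b, p, hp⟩ := Module.Finite.exists_fin' A (LinearMap.ker l)
    set k : (Fin b → A) →ₗ[A] (Fin a → A) := (LinearMap.ker l).subtype ∘ₗ p with hk
    have hrange : LinearMap.range k = LinearMap.ker l := by
      rw [hk, LinearMap.range_comp, LinearMap.range_eq_top.mpr hp, Submodule.map_top,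
        Submodule.range_subtype]
    let f : ModuleCat.of A (Fin b → A) ⟶ ModuleCat.of A (Fin a → A) := ModuleCat.ofHom k
    let g : ModuleCat.of A (Fin a → A) ⟶ M := ModuleCat.ofHom l
    have wfg : f ≫ g = 0 := by
      refine ModuleCat.hom_ext (LinearMap.ext fun x => ?_)
      exact (p x).2
    haveI : Epi g := (ModuleCat.epi_iff_surjective g).mpr hl
    have hex : (ShortComplex.mk f g wfg).Exact := by
      rw [ShortComplex.moduleCat_exact_iff_range_eq_ker]
      exact hrange
    have hc : IsColimit (CokernelCofork.ofπ g wfg) := hex.gIsCokernel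
    have hc' := isColimitCoforkMapOfIsColimit' (T ⋙ G) wfg hc
    haveI := hfree a
    haveI := hfree b
    refine aux_cokernel_comparison_isIso hc' hc
      (asIso (adj.unit.app (ModuleCat.of A (Fin b → A))))
      (asIso (adj.unit.app (ModuleCat.of A (Fin a → A))))
      ?_ (adj.unit.app M) ?_
    · simpa using adj.unit.naturality f
    · simpa using adj.unit.naturality g
  · -- the counit
    intro N
    obtain ⟨a, b, f, g, wfg, hepi, hex⟩ := hpres N
    haveI := hepi
    have hc : IsColimit (CokernelCofork.ofπ g wfg) := hex.gIsCokernel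
    have hc' := isColimitCoforkMapOfIsColimit' (G ⋙ T) wfg hc
    haveI := hcounit_free a
    haveI := hcounit_free b
    refine aux_cokernel_comparison_isIso hc hc'
      (asIso (adj.counit.app (T.obj (ModuleCat.of A (Fin b → A)))))
      (asIso (adj.counit.app (T.obj (ModuleCat.of A (Fin a → A)))))
      ?_ (adj.counit.app N) ?_
    · simpa using adj.counit.naturality f
    · simpa using adj.counit.naturality g
end

section
/- Let D be a coherent sheaf of rings on a noetherian topological space X whose sections on a basis of opens are noetherian rings, and suppose Γ(X,−) and D ⊗_A − (A = Γ(X,D)) form a quasi-inverse equivalence between finitely presented left A-modules and coherent left D-modules, with D flat over A. Then A is a left noetherian ring. -/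
open CategoryTheory Limits

universe u v w

/- STATEMENT 9: Let `D` be a coherent sheaf of rings on a noetherian space with
noetherian sections on a basis of opens, `A = Γ(X, D)`, and suppose `Γ(X, −) = G` and
`D ⊗_A − = T` form a quasi-inverse equivalence between finitely presented left
`A`-modules and coherent left `D`-modules (unit/counit isomorphisms below), with `D`
flat over `A` (`T` preserves monomorphisms).  Noetherianity of sections is encoded by
the stabilization of every increasing chain of subobjects of `D = T A` (coherent
subsheaves of `D`).  Then `A` is left noetherian. -/
theorem global_sections_left_noetherian
    (A : Type u) [Ring A]
    (C : Type v) [Category.{w} C] [Abelian C]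
    (T : ModuleCat.{u} A ⥤ C) (G : C ⥤ ModuleCat.{u} A)
    (adj : T ⊣ G)
    [PreservesFiniteLimits G] [PreservesFiniteColimits G]
    [T.PreservesMonomorphisms]
    (hunit : ∀ M : ModuleCat.{u} A, Module.FinitePresentation A M →
      IsIso (adj.unit.app M))
    (hcounit : ∀ N : C, IsIso (adj.counit.app N))
    (hnoeth : ∀ f : ℕ →o Subobject (T.obj (ModuleCat.of A A)),
      ∃ i₀, ∀ j, i₀ ≤ j → f j = f i₀) :
    IsNoetherianRing A := by
  classical
  rw [isNoetherianRing_iff_ideal_fg A]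
  intro I
  by_contra hI
  -- step 1: pick a sequence of elements of I escaping finitely generated subideals
  have key : ∀ J : Ideal A, J.FG → J ≤ I → ∃ a, a ∈ I ∧ a ∉ J := by
    intro J hfg hle
    by_contra h
    push_neg at h
    exact hI (le_antisymm hle h ▸ hfg)
  let S := {J : Ideal A // J.FG ∧ J ≤ I}
  have pick : ∀ J : S, ∃ a, a ∈ I ∧ a ∉ J.1 := fun J => key J.1 J.2.1 J.2.2
  let nxt : S → A := fun J => (pick J).choose
  have nxt_mem : ∀ J, nxt J ∈ I := fun J => (pick J).choose_spec.1
  have nxt_not : ∀ J, nxt J ∉ J.1 := fun J => (pick J).choose_spec.2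
  let succ : S → S := fun J =>
    ⟨J.1 ⊔ Ideal.span {nxt J},
      ⟨Submodule.FG.sup J.2.1 (Submodule.fg_span_singleton _),
        sup_le J.2.2 ((Submodule.span_singleton_le_iff_mem _ _).mpr (nxt_mem J))⟩⟩
  let c : ℕ → S := fun n => succ^[n] ⟨⊥, ⟨Submodule.fg_bot, bot_le⟩⟩
  let x : ℕ → A := fun n => nxt (c n)
  have hc : ∀ n, (c (n+1)).1 = (c n).1 ⊔ Ideal.span {x n} := by
    intro n
    show (succ^[n+1] _).1 = _
    rw [Function.iterate_succ_apply']
  -- step 2: identify c n with span of x over Fin n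
  have hspan : ∀ n, (c n).1 = Submodule.span A (Set.range (fun i : Fin n => x i.val)) := by
    intro n
    induction n with
    | zero =>
      have : Set.range (fun i : Fin 0 => x i.val) = (∅ : Set A) := Set.range_eq_empty _
      rw [this, Submodule.span_empty]; rfl
    | succ n ih =>
      have hr : Set.range (fun i : Fin (n+1) => x i.val)
          = Set.range (fun i : Fin n => x i.val) ∪ {x n} := by
        ext a
        simp only [Set.mem_range, Set.mem_union, Set.mem_singleton_iff]
        constructor
        · rintro ⟨i, rfl⟩
          rcases Nat.lt_or_ge i.val n with h | h
          · exact Or.inl ⟨⟨i.val, h⟩, rfl⟩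
          · have : i.val = n := le_antisymm (Nat.lt_succ_iff.mp i.isLt) h
            exact Or.inr (by rw [this])
        · rintro (⟨i, rfl⟩ | rfl)
          · exact ⟨⟨i.val, Nat.lt_succ_of_lt i.isLt⟩, rfl⟩
          · exact ⟨⟨n, Nat.lt_succ_self n⟩, rfl⟩
      rw [hc n, ih, hr, Submodule.span_union]
  -- step 3: categorical setup
  let AA : ModuleCat.{u} A := ModuleCat.of A A
  let g : ∀ n : ℕ, ModuleCat.of A (Fin n → A) ⟶ AA := fun n =>
    ModuleCat.ofHom (Fintype.linearCombination A (fun i : Fin n => x i.val) : (Fin n → A) →ₗ[A] A)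
  have hrangeg : ∀ n, LinearMap.range (g n).hom = (c n).1 := by
    intro n
    rw [hspan n]
    exact Fintype.range_linearCombination ..
  let incl : ∀ n : ℕ, ModuleCat.of A (Fin n → A) ⟶ ModuleCat.of A (Fin (n+1) → A) := fun n =>
    ModuleCat.ofHom <|
    ({ toFun := fun v => Fin.snoc v 0
       map_add' := fun v w => by
         funext i
         refine Fin.lastCases ?_ ?_ i <;> simp [Fin.snoc_castSucc, Fin.snoc_last]
       map_smul' := fun a v => by
         funext i
         refine Fin.lastCases ?_ ?_ i <;> simp [Fin.snoc_castSucc, Fin.snoc_last] } :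
      (Fin n → A) →ₗ[A] (Fin (n+1) → A))
  have hcomp : ∀ n, incl n ≫ g (n+1) = g n := by
    intro n
    apply ModuleCat.hom_ext; apply LinearMap.ext; intro v
    show Fintype.linearCombination A _ (Fin.snoc v 0) = Fintype.linearCombination A _ v
    rw [Fintype.linearCombination_apply, Fintype.linearCombination_apply,
      Fin.sum_univ_castSucc]
    simp [Fin.snoc_castSucc, Fin.snoc_last]
  let s : ℕ → Subobject (T.obj AA) := fun n => imageSubobject (T.map (g n))
  have smono : Monotone s := by
    apply monotone_nat_of_le_succ
    intro n
    have : T.map (g n) = T.map (incl n) ≫ T.map (g (n+1)) := by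
      rw [← T.map_comp, hcomp]
    rw [show s n = imageSubobject (T.map (g n)) from rfl, this]
    exact imageSubobject_comp_le _ _
  obtain ⟨i₀, hstab⟩ := hnoeth ⟨s, smono⟩
  have heq : s (i₀ + 1) = s i₀ := hstab (i₀ + 1) (Nat.le_succ _)
  -- step 4: ranges of G T g
  have hiso : ∀ n, IsIso (adj.unit.app (ModuleCat.of A (Fin n → A))) := fun n =>
    hunit _ (inferInstance : Module.FinitePresentation A (Fin n → A))
  have hisoA : IsIso (adj.unit.app AA) := hunit _ (inferInstance : Module.FinitePresentation A A)
  have hrange : ∀ n, LinearMap.range (G.map (T.map (g n))).hom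
      = (LinearMap.range (g n).hom).map (adj.unit.app AA).hom := by
    intro n
    have hnat : g n ≫ adj.unit.app AA = adj.unit.app _ ≫ G.map (T.map (g n)) := by
      have := adj.unit.naturality (g n)
      simpa using this
    have hsurj : Function.Surjective (adj.unit.app (ModuleCat.of A (Fin n → A))) := by
      letI := hiso n
      intro y
      refine ⟨inv (adj.unit.app (ModuleCat.of A (Fin n → A))) y, ?_⟩
      have h2 : adj.unit.app (ModuleCat.of A (Fin n → A))
          (inv (adj.unit.app (ModuleCat.of A (Fin n → A))) y)
          = (inv (adj.unit.app (ModuleCat.of A (Fin n → A)))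
              ≫ adj.unit.app (ModuleCat.of A (Fin n → A))) y := rfl
      rw [h2, IsIso.inv_hom_id]
      rfl
    have h1 : LinearMap.range (G.map (T.map (g n))).hom
        = LinearMap.range (adj.unit.app (ModuleCat.of A (Fin n → A)) ≫ G.map (T.map (g n))).hom := by
      show _ = LinearMap.range (LinearMap.comp _ _)
      exact (LinearMap.range_comp_of_range_eq_top _ (LinearMap.range_eq_top.mpr hsurj)).symm
    rw [h1, ← hnat]
    show LinearMap.range (LinearMap.comp _ _) = _
    rw [LinearMap.range_comp]
    rfl
  -- step 5: range of G T g depends only on the image subobject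
  have himg : ∀ n, LinearMap.range (G.map (T.map (g n))).hom
      = LinearMap.range (G.map ((s n).arrow)).hom := by
    intro n
    rw [← imageSubobject_arrow_comp (T.map (g n)), G.map_comp]
    have hepi : Epi (G.map (factorThruImageSubobject (T.map (g n)))) :=
      G.map_epi _
    have hsurj : Function.Surjective (G.map (factorThruImageSubobject (T.map (g n)))) :=
      (ModuleCat.epi_iff_surjective _).mp hepi
    show LinearMap.range (LinearMap.comp _ _) = _
    exact LinearMap.range_comp_of_range_eq_top _ (LinearMap.range_eq_top.mpr hsurj)
  -- step 6: conclude
  have hmap : Submodule.map (adj.unit.app AA : AA ⟶ (T ⋙ G).obj AA).hom (c (i₀+1)).1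
      = Submodule.map (adj.unit.app AA : AA ⟶ (T ⋙ G).obj AA).hom (c i₀).1 := by
    rw [← hrangeg, ← hrangeg, ← hrange, ← hrange, himg, himg, heq]
  have hinj : Function.Injective (adj.unit.app AA) := by
    letI := hisoA
    intro a b hab
    have h2 : ∀ z : AA, (adj.unit.app AA ≫ inv (adj.unit.app AA)) z
        = inv (adj.unit.app AA) (adj.unit.app AA z) := fun z => rfl
    have := congrArg (inv (adj.unit.app AA)) hab
    rw [← h2, ← h2, IsIso.hom_inv_id] at this
    exact this
  have hceq : (c (i₀+1)).1 = (c i₀).1 := Submodule.map_injective_of_injective hinj hmap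
  have hxmem : x i₀ ∈ (c (i₀+1)).1 := by
    rw [hc i₀]
    exact Submodule.mem_sup_right (Submodule.mem_span_singleton_self _)
  exact nxt_not (c i₀) (hceq ▸ hxmem)
end
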